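/- arXiv:2004.09341 — 5 statements merged into one kernel-verified Lean document; each statement's English description precedes it below -/
import Mathlib

section
/- Suppose (a_k)_{k≥1} is a sequence of nonnegative real numbers and (c_k)_{k≥1} is a bounded sequence of nonnegative real numbers such that a_{k+1}² ≤ c_k · (a_k − a_{k+1}) for all k ≥ 1. Then for every k ≥ 1 one has a_{k+1} ≤ √(max_{1≤i≤k} c_i) · √(a_1) / √k. -/
/-! The recursion forces `a` to be nonincreasing, so `k a_{k+1}² ≤ ∑_{i ≤ k} a_{i+1}²`, and the
latter is at most `max_{i ≤ k} c_i` times the telescoping sum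
`∑_{i ≤ k} (a_i - a_{i+1}) = a_1 - a_{k+1} ≤ a_1`. -/

open Finset

lemma le_of_sq_le_mul_sub {x y c : ℝ} (hc : 0 ≤ c) (hx : 0 ≤ x) (hy : 0 ≤ y)
    (h : y ^ 2 ≤ c * (x - y)) : y ≤ x := by
  nlinarith

section SqLeMulSub

variable {a c : ℕ → ℝ} (ha : ∀ n, 0 ≤ a n) (hc : ∀ n, 0 ≤ c n)
  (hrec : ∀ n, a (n + 1) ^ 2 ≤ c n * (a n - a (n + 1)))
include ha hc hrec

lemma antitone_of_sq_le_mul_sub : Antitone a :=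
  antitone_nat_of_succ_le fun n ↦ le_of_sq_le_mul_sub (hc n) (ha n) (ha (n + 1)) (hrec n)

lemma mul_sq_le_of_sq_le_mul_sub {C : ℝ} {k : ℕ} (hC : ∀ i < k, c i ≤ C) :
    k * a k ^ 2 ≤ C * (a 0 - a k) := by
  have hanti := antitone_of_sq_le_mul_sub ha hc hrec
  calc (k : ℝ) * a k ^ 2 = ∑ _i ∈ range k, a k ^ 2 := by simp
    _ ≤ ∑ i ∈ range k, a (i + 1) ^ 2 := sum_le_sum fun i hi ↦
        pow_le_pow_left₀ (ha k) (hanti (mem_range.1 hi)) 2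
    _ ≤ ∑ i ∈ range k, C * (a i - a (i + 1)) := sum_le_sum fun i hi ↦
        (hrec i).trans <| mul_le_mul_of_nonneg_right (hC i (mem_range.1 hi))
          (sub_nonneg.2 (hanti i.le_succ))
    _ = C * (a 0 - a k) := by rw [← mul_sum, sum_range_sub']

end SqLeMulSub

theorem iteration_lemma_general
    (a c : ℕ → ℝ)
    (ha : ∀ k, 1 ≤ k → 0 ≤ a k)
    (hc : ∀ k, 1 ≤ k → 0 ≤ c k)
    (hrec : ∀ k, 1 ≤ k → a (k + 1) ^ 2 ≤ c k * (a k - a (k + 1))) :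
    ∀ k, ∀ hk : 1 ≤ k,
      a (k + 1) ≤
        Real.sqrt ((Finset.Icc 1 k).sup' (Finset.nonempty_Icc.mpr hk) c) *
          Real.sqrt (a 1) / Real.sqrt (k : ℝ) := by
  intro k hk
  set C := (Icc 1 k).sup' (nonempty_Icc.mpr hk) c
  have hC : ∀ i < k, c (i + 1) ≤ C := fun i hi ↦
    le_sup' c (mem_Icc.2 ⟨by omega, by omega⟩)
  have hC0 : 0 ≤ C := (hc 1 le_rfl).trans (hC 0 hk)
  have key : k * a (k + 1) ^ 2 ≤ C * (a 1 - a (k + 1)) :=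
    mul_sq_le_of_sq_le_mul_sub (a := fun n ↦ a (n + 1)) (c := fun n ↦ c (n + 1))
      (fun n ↦ ha _ (by omega)) (fun n ↦ hc _ (by omega)) (fun n ↦ hrec _ (by omega)) hC
  have hk0 : (0 : ℝ) < k := by exact_mod_cast hk
  have hak : 0 ≤ a (k + 1) := ha _ (by omega)
  have hCa : 0 ≤ C * a 1 := mul_nonneg hC0 (ha 1 le_rfl)
  rw [← Real.sqrt_mul hC0, ← Real.sqrt_div' _ hk0.le, Real.le_sqrt hak (div_nonneg hCa hk0.le),
    le_div_iff₀ hk0]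
  linarith [mul_nonneg hC0 hak]

/-- Iteration lemma (cf. Aguilera–Caffarelli, A2): if `(a k)` is nonnegative,
`(c k)` is nonnegative and bounded, and `a (k+1)² ≤ c k * (a k − a (k+1))` for
all `k ≥ 1`, then `a (k+1) ≤ √(max_{1≤i≤k} c i) * √(a 1) / √k` for all `k ≥ 1`. -/
theorem iteration_lemma
    (a c : ℕ → ℝ) (M : ℝ)
    (ha : ∀ k, 1 ≤ k → 0 ≤ a k)
    (hc : ∀ k, 1 ≤ k → 0 ≤ c k)
    (hM : ∀ k, 1 ≤ k → c k ≤ M)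
    (hrec : ∀ k, 1 ≤ k → a (k + 1) ^ 2 ≤ c k * (a k - a (k + 1))) :
    ∀ k, ∀ hk : 1 ≤ k,
      a (k + 1) ≤
        Real.sqrt ((Finset.Icc 1 k).sup' (Finset.nonempty_Icc.mpr hk) c) *
          Real.sqrt (a 1) / Real.sqrt (k : ℝ) :=
  iteration_lemma_general a c ha hc hrec
end

section
/- Let N ∈ ℕ and let M be a real N×N matrix whose off-diagonal entries are nonpositive, i.e. M_{ij} ≤ 0 for all i ≠ j. Let u, v, b, c ∈ ℝᴺ satisfy (Mu)_i ≤ b_i and (Mv)_i ≤ c_i for every i, where (Mw)_i = ∑_j M_{ij} w_j. Then the componentwise maximum u ∨ v (defined by (u ∨ v)_i = max(u_i, v_i)) satisfies (M(u ∨ v))_i ≤ max(b_i, c_i) for every i. -/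
namespace Matrix

variable {n α : Type*} [Fintype n] [Ring α] [LinearOrder α] [IsOrderedRing α]
  {M : Matrix n n α} {i : n}

theorem mulVec_apply_le_of_offDiag_nonpos (hM : ∀ j, j ≠ i → M i j ≤ 0) {u w : n → α}
    (hle : u ≤ w) (heq : w i = u i) : (M *ᵥ w) i ≤ (M *ᵥ u) i := by
  refine Finset.sum_le_sum fun j _ => ?_
  rcases eq_or_ne j i with rfl | hj
  · rw [heq]
  · exact mul_le_mul_of_nonpos_left (hle j) (hM j hj)

theorem mulVec_sup_apply_le_of_offDiag_nonpos (hM : ∀ j, j ≠ i → M i j ≤ 0) {u v : n → α}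
    (h : v i ≤ u i) : (M *ᵥ (u ⊔ v)) i ≤ (M *ᵥ u) i :=
  mulVec_apply_le_of_offDiag_nonpos hM le_sup_left (sup_eq_left.mpr h)

end Matrix

/-- The linear-algebraic core of "the nodal maximum of two discrete
subsolutions is a discrete subsolution": if `M` has nonpositive off-diagonal
entries and `M u ≤ b`, `M v ≤ c` componentwise, then
`M (u ∨ v) ≤ b ∨ c` componentwise, where `∨` is the componentwise maximum. -/
theorem mulVec_max_le_of_offdiag_nonpos
    (N : ℕ) (M : Matrix (Fin N) (Fin N) ℝ)
    (hM : ∀ i j, i ≠ j → M i j ≤ 0)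
    (u v b c : Fin N → ℝ)
    (hu : ∀ i, M.mulVec u i ≤ b i)
    (hv : ∀ i, M.mulVec v i ≤ c i) :
    ∀ i, M.mulVec (fun j => max (u j) (v j)) i ≤ max (b i) (c i) := by
  intro i
  have hMi : ∀ j, j ≠ i → M i j ≤ 0 := fun j hj => hM i j hj.symm
  change M.mulVec (u ⊔ v) i ≤ b i ⊔ c i
  rcases le_total (v i) (u i) with hvu | huv
  · calc M.mulVec (u ⊔ v) i ≤ M.mulVec u i :=
          Matrix.mulVec_sup_apply_le_of_offDiag_nonpos hMi hvu
      _ ≤ b i ⊔ c i := (hu i).trans le_sup_left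
  · calc M.mulVec (u ⊔ v) i = M.mulVec (v ⊔ u) i := by rw [sup_comm]
      _ ≤ M.mulVec v i := Matrix.mulVec_sup_apply_le_of_offDiag_nonpos hMi huv
      _ ≤ b i ⊔ c i := (hv i).trans le_sup_right
end

section
/- Let N ∈ ℕ and let M be a real N×N matrix with M_{ij} ≤ 0 for all i ≠ j and with zero row sums, i.e. ∑_j M_{ij} = 0 for every i. Let u, b ∈ ℝᴺ satisfy (Mu)_i ≤ b_i for every i. Then for every constant c ∈ ℝ, the vector w defined by w_i = max(u_i − c, 0) satisfies (Mw)_i ≤ max(b_i, 0) for every i. -/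
/-!
Constants lie in the kernel of `M` because its rows sum to zero, so `u - c` is again a
subsolution. In row `i`, the positive part `(u - c) ⊔ 0` agrees with whichever of `u - c` and `0`
is larger at `i`, and dominates it elsewhere; since the off-diagonal entries of `M` are
nonpositive, row `i` of `M` applied to the positive part is bounded by row `i` applied to that
vector, hence by `max (b i) 0`.
-/

namespace Matrix

variable {n R : Type*} [Fintype n] [Ring R] {M : Matrix n n R}

theorem mulVec_sub_const_of_rowSum_zero (hrow : ∀ i, ∑ j, M i j = 0) (u : n → R) (c : R) :
    M *ᵥ (u - fun _ => c) = M *ᵥ u := by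
  ext i
  simp [mulVec, dotProduct, mul_sub, Finset.sum_sub_distrib, ← Finset.sum_mul, hrow i]

variable [LinearOrder R] [IsStrictOrderedRing R]

theorem mulVec_sup_apply_le_of_le (hM : ∀ i j, i ≠ j → M i j ≤ 0) {x y : n → R} {i : n}
    (hyx : y i ≤ x i) : (M *ᵥ (x ⊔ y)) i ≤ (M *ᵥ x) i := by
  refine Finset.sum_le_sum fun j _ => ?_
  rcases eq_or_ne i j with rfl | hij
  · simp [hyx]
  · exact mul_le_mul_of_nonpos_left le_sup_left (hM i j hij)

theorem mulVec_sup_apply_le_max (hM : ∀ i j, i ≠ j → M i j ≤ 0) (x y : n → R) (i : n) :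
    (M *ᵥ (x ⊔ y)) i ≤ max ((M *ᵥ x) i) ((M *ᵥ y) i) := by
  rcases le_total (y i) (x i) with hyx | hxy
  · exact (mulVec_sup_apply_le_of_le hM hyx).trans (le_max_left _ _)
  · rw [sup_comm]
    exact (mulVec_sup_apply_le_of_le hM hxy).trans (le_max_right _ _)

end Matrix

/-- The linear-algebraic form of "the nodal positive part of a discrete
subsolution is a discrete subsolution": if `M` has nonpositive off-diagonal
entries and zero row sums, and `M u ≤ b` componentwise, then for any constant
`c` the vector `w` with `w i = max (u i − c) 0` satisfies
`M w ≤ max b 0` componentwise. -/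
theorem mulVec_posPart_le_of_offdiag_nonpos_rowSum_zero
    (N : ℕ) (M : Matrix (Fin N) (Fin N) ℝ)
    (hM : ∀ i j, i ≠ j → M i j ≤ 0)
    (hrow : ∀ i, ∑ j, M i j = 0)
    (u b : Fin N → ℝ)
    (hu : ∀ i, M.mulVec u i ≤ b i) :
    ∀ c : ℝ, ∀ i, M.mulVec (fun j => max (u j - c) 0) i ≤ max (b i) 0 := by
  intro c i
  calc M.mulVec ((u - fun _ => c) ⊔ 0) i
      ≤ max (M.mulVec (u - fun _ => c) i) (M.mulVec 0 i) :=
        Matrix.mulVec_sup_apply_le_max hM _ _ i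
    _ ≤ max (b i) 0 := by
        rw [Matrix.mulVec_sub_const_of_rowSum_zero hrow, Matrix.mulVec_zero]
        exact max_le_max_right 0 (hu i)
end

section
/- Let N ∈ ℕ and let M be a real N×N matrix with M_{ij} ≤ 0 for all i ≠ j and zero column sums, i.e. ∑_i M_{ij} = 0 for every j. Let v ∈ ℝᴺ with 0 ≤ v_i ≤ 1 for all i. Fix an index j with M_{jj} > 0 and suppose ∑_i v_i M_{ij} ≤ ρ for some ρ ∈ ℝ. If k ≠ j is an index with −M_{kj} ≥ τ M_{jj} for some τ ∈ (0,1], then v_j ≤ 1 − τ + τ v_k + ρ / M_{jj}. -/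
/-!
Since the columns of `M` sum to zero, `∑ i, v i * M i j = ∑ i, (v i - 1) * M i j`, and every
off-diagonal term `(v i - 1) * M i j` is a product of two nonpositive numbers. Dropping all of
them except the terms `i = j` and `i = k` gives `(v j - 1) * M j j + (v k - 1) * M k j ≤ ρ`, and
`-M k j ≥ τ * M j j` turns this into `(v j - 1 + τ * (1 - v k)) * M j j ≤ ρ`.
-/

open Finset

section

variable {ι R : Type*} [Fintype ι]

theorem Matrix.sum_sub_const_mul_of_col_sum_eq_zero [Ring R] (M : Matrix ι ι R) (v : ι → R)
    (c : R) {j : ι} (hcol : ∑ i, M i j = 0) :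
    ∑ i, (v i - c) * M i j = ∑ i, v i * M i j := by
  simp only [sub_mul, sum_sub_distrib, ← mul_sum, hcol, mul_zero, sub_zero]

theorem Matrix.add_le_sum_sub_one_mul_of_offDiag_nonpos [DecidableEq ι] [Ring R] [LinearOrder R]
    [IsStrictOrderedRing R] (M : Matrix ι ι R) (v : ι → R) (hv : ∀ i, v i ≤ 1) {j k : ι}
    (hkj : k ≠ j) (hoff : ∀ i, i ≠ j → M i j ≤ 0) :
    (v j - 1) * M j j + (v k - 1) * M k j ≤ ∑ i, (v i - 1) * M i j := by
  rw [← sum_pair (f := fun i ↦ (v i - 1) * M i j) hkj.symm]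
  refine sum_le_sum_of_subset_of_nonneg (subset_univ _) fun i _ hi ↦ ?_
  have hij : i ≠ j := fun h ↦ hi (by simp [h])
  exact mul_nonneg_of_nonpos_of_nonpos (sub_nonpos.2 (hv i)) (hoff i hij)

end

theorem discrete_one_step_comparison_general
    (N : ℕ) (M : Matrix (Fin N) (Fin N) ℝ)
    (hM : ∀ i j, i ≠ j → M i j ≤ 0)
    (hcol : ∀ j, ∑ i, M i j = 0)
    (v : Fin N → ℝ) (hv1 : ∀ i, v i ≤ 1)
    (j : Fin N) (hMjj : 0 < M j j)
    (ρ : ℝ) (hρ : ∑ i, v i * M i j ≤ ρ)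
    (k : Fin N) (hkj : k ≠ j)
    (τ : ℝ)
    (hτM : τ * M j j ≤ -M k j) :
    v j ≤ 1 - τ + τ * v k + ρ / M j j := by
  have hpair : (v j - 1) * M j j + (v k - 1) * M k j ≤ ρ := by
    calc _ ≤ ∑ i, (v i - 1) * M i j :=
          M.add_le_sum_sub_one_mul_of_offDiag_nonpos v hv1 hkj fun i hi ↦ hM i j hi
      _ = ∑ i, v i * M i j := M.sum_sub_const_mul_of_col_sum_eq_zero v 1 (hcol j)
      _ ≤ ρ := hρ
  have hk : (1 - v k) * (τ * M j j) ≤ (1 - v k) * -M k j :=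
    mul_le_mul_of_nonneg_left hτM (sub_nonneg.2 (hv1 k))
  have hscaled : (v j - 1 + τ * (1 - v k)) * M j j ≤ ρ := by linarith
  have := (le_div_iff₀ hMjj).2 hscaled
  linarith

/-- The algebraic one-step comparison inequality underlying the discrete
De Giorgi argument: if `M` has nonpositive off-diagonal entries and zero
column sums, `0 ≤ v ≤ 1` componentwise, `M j j > 0`, `∑ i, v i * M i j ≤ ρ`,
and `k ≠ j` satisfies `−M k j ≥ τ * M j j` with `τ ∈ (0,1]`, then
`v j ≤ 1 − τ + τ * v k + ρ / M j j`. -/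
theorem discrete_one_step_comparison
    (N : ℕ) (M : Matrix (Fin N) (Fin N) ℝ)
    (hM : ∀ i j, i ≠ j → M i j ≤ 0)
    (hcol : ∀ j, ∑ i, M i j = 0)
    (v : Fin N → ℝ) (hv0 : ∀ i, 0 ≤ v i) (hv1 : ∀ i, v i ≤ 1)
    (j : Fin N) (hMjj : 0 < M j j)
    (ρ : ℝ) (hρ : ∑ i, v i * M i j ≤ ρ)
    (k : Fin N) (hkj : k ≠ j)
    (τ : ℝ) (hτ0 : 0 < τ) (hτ1 : τ ≤ 1)
    (hτM : τ * M j j ≤ -M k j) :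
    v j ≤ 1 - τ + τ * v k + ρ / M j j :=
  discrete_one_step_comparison_general N M hM hcol v hv1 j hMjj ρ hρ k hkj τ hτM
end

section
/- Let Ω = (−2,2)² ⊂ ℝ² and let e₁ = (1,0). Define F : Ω → ℝ² by F(x) = e₁ if |x₁| < 1 and F(x) = −e₁ if |x₁| ≥ 1, and define G : Ω → ℝ² by G(x) = 3e₁ if x₁ ≤ −1, G(x) = e₁ if −1 < x₁ < 1, and G(x) = −e₁ if x₁ ≥ 1. Then for every nonnegative φ ∈ C_c^∞(Ω): ∫_Ω G(x)·∇φ(x) dx ≥ | ∫_Ω F(x)·∇φ(x) dx | ≥ 0. -/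
open MeasureTheory Set

/-- The domain `Ω = (−2,2)² ⊆ ℝ²`. -/
def starOmega : Set (ℝ × ℝ) := Ioo (-2 : ℝ) 2 ×ˢ Ioo (-2 : ℝ) 2

/-- `F(x) = e₁` if `|x₁| < 1`, `F(x) = −e₁` if `|x₁| ≥ 1`. -/
noncomputable def starF : ℝ × ℝ → ℝ × ℝ :=
  fun x => if |x.1| < 1 then (1, 0) else (-1, 0)

/-- `G(x) = 3e₁` if `x₁ ≤ −1`, `G(x) = e₁` if `−1 < x₁ < 1`, `G(x) = −e₁` if `x₁ ≥ 1`. -/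
noncomputable def starG : ℝ × ℝ → ℝ × ℝ :=
  fun x => if x.1 ≤ -1 then (3, 0) else if x.1 < 1 then (1, 0) else (-1, 0)

section Aux

variable {φ : ℝ × ℝ → ℝ}

lemma aux_cont (hφ : ContDiff ℝ (⊤ : ℕ∞) φ) (v : ℝ × ℝ) :
    Continuous fun x => fderiv ℝ φ x v :=
  (hφ.continuous_fderiv (by simp)).clm_apply continuous_const

lemma aux_int (hφ : ContDiff ℝ (⊤ : ℕ∞) φ) (hs : HasCompactSupport φ) (v : ℝ × ℝ) :
    Integrable (fun x => fderiv ℝ φ x v) volume :=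
  (aux_cont hφ v).integrable_of_hasCompactSupport (hs.fderiv_apply (𝕜 := ℝ) v)

/-- FTC on a vertical strip. -/
lemma aux_strip (hφ : ContDiff ℝ (⊤ : ℕ∞) φ) (hs : HasCompactSupport φ)
    {a b : ℝ} (hab : a ≤ b) :
    ∫ x in Ioo a b ×ˢ Ioo (-2 : ℝ) 2, fderiv ℝ φ x (1, 0) =
      ∫ y in Ioo (-2 : ℝ) 2, (φ (b, y) - φ (a, y)) := by
  have hint : IntegrableOn (fun x => fderiv ℝ φ x (1, 0))
      (Ioo a b ×ˢ Ioo (-2 : ℝ) 2) volume := (aux_int hφ hs _).integrableOn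
  have hint2 : Integrable (fun x : ℝ × ℝ => fderiv ℝ φ x (1, 0))
      (((volume : Measure ℝ).restrict (Ioo a b)).prod
        ((volume : Measure ℝ).restrict (Ioo (-2 : ℝ) 2))) := by
    rw [Measure.prod_restrict]
    exact hint
  rw [show (volume : Measure (ℝ × ℝ)) = (volume : Measure ℝ).prod volume from
    (MeasureTheory.Measure.volume_eq_prod _ _), ← Measure.prod_restrict]
  rw [MeasureTheory.integral_prod_symm _ hint2]
  refine integral_congr_ae (Filter.Eventually.of_forall fun y => ?_)
  have hψ : ∀ t : ℝ, HasDerivAt (fun s => φ (s, y)) (fderiv ℝ φ (t, y) (1, 0)) t := by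
    intro t
    exact ((hφ.differentiable (by simp) (t, y)).hasFDerivAt).comp_hasDerivAt t
      ((hasDerivAt_id t).prodMk (hasDerivAt_const t y))
  have hcont : Continuous fun t : ℝ => fderiv ℝ φ (t, y) (1, 0) :=
    (aux_cont hφ _).comp (continuous_id.prodMk continuous_const)
  calc ∫ x in Ioo a b, fderiv ℝ φ (x, y) (1, 0)
      = ∫ x in Set.Ioc a b, fderiv ℝ φ (x, y) (1, 0) :=
        (MeasureTheory.integral_Ioc_eq_integral_Ioo).symm
    _ = ∫ x in a..b, fderiv ℝ φ (x, y) (1, 0) :=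
        (intervalIntegral.integral_of_le hab).symm
    _ = φ (b, y) - φ (a, y) :=
        intervalIntegral.integral_eq_sub_of_hasDerivAt
          (fun t _ => hψ t) (hcont.intervalIntegrable a b)

lemma aux_smul (φ : ℝ × ℝ → ℝ) (c : ℝ) (x : ℝ × ℝ) :
    fderiv ℝ φ x (c, 0) = c * fderiv ℝ φ x (1, 0) := by
  have h := (fderiv ℝ φ x).map_smul c ((1 : ℝ), (0 : ℝ))
  simp only [Prod.smul_mk, smul_eq_mul, mul_one, mul_zero] at h
  simpa using h

/-- Splitting the integral over Ω for a field constant on the three strips. -/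
lemma aux_key (hφ : ContDiff ℝ (⊤ : ℕ∞) φ) (hs : HasCompactSupport φ)
    (V : ℝ × ℝ → ℝ × ℝ) (c₁ c₂ c₃ : ℝ)
    (h1 : ∀ x : ℝ × ℝ, x.1 ∈ Ioo (-2 : ℝ) (-1) → V x = (c₁, 0))
    (h2 : ∀ x : ℝ × ℝ, x.1 ∈ Ioo (-1 : ℝ) 1 → V x = (c₂, 0))
    (h3 : ∀ x : ℝ × ℝ, x.1 ∈ Ioo (1 : ℝ) 2 → V x = (c₃, 0)) :
    ∫ x in starOmega, fderiv ℝ φ x (V x) =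
      c₁ * (∫ y in Ioo (-2 : ℝ) 2, (φ (-1, y) - φ (-2, y)))
      + c₂ * (∫ y in Ioo (-2 : ℝ) 2, (φ (1, y) - φ (-1, y)))
      + c₃ * (∫ y in Ioo (-2 : ℝ) 2, (φ (2, y) - φ (1, y))) := by
  set I : Set ℝ := Ioo (-2 : ℝ) 2 with hI
  set S₁ : Set (ℝ × ℝ) := Ioo (-2 : ℝ) (-1) ×ˢ I with hS₁
  set S₂ : Set (ℝ × ℝ) := Ioo (-1 : ℝ) 1 ×ˢ I with hS₂
  set S₃ : Set (ℝ × ℝ) := Ioo (1 : ℝ) 2 ×ˢ I with hS₃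
  have hm1 : MeasurableSet S₁ := measurableSet_Ioo.prod measurableSet_Ioo
  have hm2 : MeasurableSet S₂ := measurableSet_Ioo.prod measurableSet_Ioo
  have hm3 : MeasurableSet S₃ := measurableSet_Ioo.prod measurableSet_Ioo
  have hsub : S₁ ∪ S₂ ∪ S₃ ⊆ starOmega := by
    rintro ⟨x, y⟩ hx
    simp only [hS₁, hS₂, hS₃, hI, mem_union, mem_prod, mem_Ioo] at hx
    rcases hx with (⟨⟨h, h'⟩, hy⟩ | ⟨⟨h, h'⟩, hy⟩) | ⟨⟨h, h'⟩, hy⟩ <;>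
      exact ⟨⟨by linarith, by linarith⟩, hy⟩
  -- the boundary lines are null
  have hnull : volume ((({-1, 1} : Set ℝ)) ×ˢ (univ : Set ℝ)) = 0 := by
    rw [show (volume : Measure (ℝ × ℝ)) = (volume : Measure ℝ).prod volume from
      (MeasureTheory.Measure.volume_eq_prod _ _), Measure.prod_prod,
      Set.Finite.measure_zero (Set.toFinite _) volume, zero_mul]
  have hae : starOmega =ᵐ[(volume : Measure (ℝ × ℝ))] (S₁ ∪ S₂ ∪ S₃ : Set (ℝ × ℝ)) := by
    refine (MeasureTheory.ae_eq_set).2 ⟨?_, ?_⟩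
    swap
    · have : (S₁ ∪ S₂ ∪ S₃) \ starOmega = ∅ := diff_eq_empty.mpr hsub
      rw [this]; simp
    refine measure_mono_null ?_ hnull
    · rintro ⟨x, y⟩ ⟨hx, hnx⟩
      simp only [hS₁, hS₂, hS₃, hI, mem_union, mem_prod, mem_Ioo, not_or] at hnx
      obtain ⟨⟨hx1, hx2⟩, hy⟩ := hx
      simp only [mem_Ioo] at hx1 hy
      refine mem_prod.2 ⟨?_, mem_univ _⟩
      simp only [mem_insert_iff, mem_singleton_iff]
      by_contra h
      push_neg at h
      obtain ⟨hne1, hne2⟩ := h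
      rcases lt_trichotomy x (-1) with hlt | heq | hgt
      · exact hnx.1.1 ⟨⟨hx1, hlt⟩, hy⟩
      · exact hne1 heq
      · rcases lt_trichotomy x 1 with hlt' | heq' | hgt'
        · exact hnx.1.2 ⟨⟨hgt, hlt'⟩, hy⟩
        · exact hne2 heq'
        · exact hnx.2 ⟨⟨hgt', hx2⟩, hy⟩
  have hi1 : IntegrableOn (fun x => fderiv ℝ φ x (V x)) S₁ volume :=
    ((aux_int hφ hs (c₁, 0)).integrableOn (s := S₁)).congr_fun
      (fun x hx => (congrArg (fderiv ℝ φ x) (h1 x hx.1)).symm) hm1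
  have hi2 : IntegrableOn (fun x => fderiv ℝ φ x (V x)) S₂ volume :=
    ((aux_int hφ hs (c₂, 0)).integrableOn (s := S₂)).congr_fun
      (fun x hx => (congrArg (fderiv ℝ φ x) (h2 x hx.1)).symm) hm2
  have hi3 : IntegrableOn (fun x => fderiv ℝ φ x (V x)) S₃ volume :=
    ((aux_int hφ hs (c₃, 0)).integrableOn (s := S₃)).congr_fun
      (fun x hx => (congrArg (fderiv ℝ φ x) (h3 x hx.1)).symm) hm3
  have hd12 : Disjoint S₁ S₂ := by
    apply Set.disjoint_left.2
    rintro ⟨x, y⟩ hx hx'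
    simp only [hS₁, hS₂, mem_prod, mem_Ioo] at hx hx'
    linarith [hx.1.2, hx'.1.1]
  have hd3 : Disjoint (S₁ ∪ S₂) S₃ := by
    apply Set.disjoint_left.2
    rintro ⟨x, y⟩ hx hx'
    simp only [hS₁, hS₂, hS₃, mem_union, mem_prod, mem_Ioo] at hx hx'
    rcases hx with ⟨⟨_, h'⟩, _⟩ | ⟨⟨_, h'⟩, _⟩ <;> linarith [hx'.1.1]
  have hstrip : ∀ (c a b : ℝ), a ≤ b →
      (∀ x : ℝ × ℝ, x.1 ∈ Ioo a b → V x = (c, 0)) →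
      ∫ x in Ioo a b ×ˢ I, fderiv ℝ φ x (V x) =
        c * ∫ y in I, (φ (b, y) - φ (a, y)) := by
    intro c a b hab hV
    rw [setIntegral_congr_fun (f := fun x => fderiv ℝ φ x (V x))
      (g := fun x => fderiv ℝ φ x (c, 0))
      (measurableSet_Ioo.prod measurableSet_Ioo)
      (fun x hx => congrArg (fderiv ℝ φ x) (hV x hx.1))]
    simp_rw [aux_smul φ c]
    rw [MeasureTheory.integral_const_mul, hI, aux_strip hφ hs hab]
  calc ∫ x in starOmega, fderiv ℝ φ x (V x)
      = ∫ x in S₁ ∪ S₂ ∪ S₃, fderiv ℝ φ x (V x) := setIntegral_congr_set hae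
    _ = (∫ x in S₁ ∪ S₂, fderiv ℝ φ x (V x)) + ∫ x in S₃, fderiv ℝ φ x (V x) :=
        setIntegral_union hd3 hm3 (hi1.union hi2) hi3
    _ = (∫ x in S₁, fderiv ℝ φ x (V x)) + (∫ x in S₂, fderiv ℝ φ x (V x))
          + ∫ x in S₃, fderiv ℝ φ x (V x) := by
        rw [setIntegral_union hd12 hm2 hi1 hi2]
    _ = c₁ * (∫ y in I, (φ (-1, y) - φ (-2, y)))
        + c₂ * (∫ y in I, (φ (1, y) - φ (-1, y)))
        + c₃ * (∫ y in I, (φ (2, y) - φ (1, y))) := by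
        rw [hstrip c₁ (-2) (-1) (by norm_num) h1,
          hstrip c₂ (-1) 1 (by norm_num) h2,
          hstrip c₃ 1 2 (by norm_num) h3]

end Aux

/-- The vector field `F` (whose distributional divergence changes sign)
satisfies assumption (★) with dominating field `G`: for every nonnegative
test function `φ ∈ C_c^∞(Ω)`,
`∫_Ω G·∇φ ≥ |∫_Ω F·∇φ| ≥ 0`. -/
theorem assumption_star_example :
    ∀ φ : ℝ × ℝ → ℝ,
      ContDiff ℝ (⊤ : ℕ∞) φ → HasCompactSupport φ → tsupport φ ⊆ starOmega →
      (∀ x, 0 ≤ φ x) →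
      |∫ x in starOmega, fderiv ℝ φ x (starF x)| ≤
          ∫ x in starOmega, fderiv ℝ φ x (starG x) ∧
        0 ≤ |∫ x in starOmega, fderiv ℝ φ x (starF x)| := by
  intro φ hφ hs hsupp hpos
  -- φ vanishes on the lines x₁ = ±2
  have hvanish : ∀ y : ℝ, φ (-2, y) = 0 ∧ φ (2, y) = 0 := by
    intro y
    constructor <;> apply image_eq_zero_of_notMem_tsupport <;> intro h <;>
      · have := hsupp h
        simp only [starOmega, mem_prod, mem_Ioo] at this
        linarith [this.1.1, this.1.2]
  set A : ℝ := ∫ y in Ioo (-2 : ℝ) 2, φ (-1, y) with hA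
  set B : ℝ := ∫ y in Ioo (-2 : ℝ) 2, φ (1, y) with hB
  have e1 : (∫ y in Ioo (-2 : ℝ) 2, (φ (-1, y) - φ (-2, y))) = A := by
    rw [hA]
    refine integral_congr_ae (Filter.Eventually.of_forall fun y => ?_)
    simp [(hvanish y).1]
  have e3 : (∫ y in Ioo (-2 : ℝ) 2, (φ (2, y) - φ (1, y))) = -B := by
    rw [hB, ← integral_neg]
    refine integral_congr_ae (Filter.Eventually.of_forall fun y => ?_)
    simp [(hvanish y).2]
  have e2 : (∫ y in Ioo (-2 : ℝ) 2, (φ (1, y) - φ (-1, y))) = B - A := by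
    have hc1 : Continuous fun y : ℝ => φ (1, y) :=
      hφ.continuous.comp (continuous_const.prodMk continuous_id)
    have hc2 : Continuous fun y : ℝ => φ (-1, y) :=
      hφ.continuous.comp (continuous_const.prodMk continuous_id)
    have hint1 : IntegrableOn (fun y : ℝ => φ (1, y)) (Ioo (-2 : ℝ) 2) volume :=
      (hc1.continuousOn.integrableOn_compact isCompact_Icc).mono_set Ioo_subset_Icc_self
    have hint2 : IntegrableOn (fun y : ℝ => φ (-1, y)) (Ioo (-2 : ℝ) 2) volume :=
      (hc2.continuousOn.integrableOn_compact isCompact_Icc).mono_set Ioo_subset_Icc_self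
    rw [hA, hB, integral_sub hint1 hint2]
  have hF : ∫ x in starOmega, fderiv ℝ φ x (starF x) = 2 * B - 2 * A := by
    rw [aux_key hφ hs starF (-1) 1 (-1)
      (fun x hx => by
        simp only [mem_Ioo] at hx
        have h : ¬ |x.1| < 1 := by rw [not_lt, le_abs]; right; linarith [hx.2]
        simp only [starF, if_neg h])
      (fun x hx => by
        simp only [mem_Ioo] at hx
        have h : |x.1| < 1 := abs_lt.2 ⟨hx.1, hx.2⟩
        simp only [starF, if_pos h])
      (fun x hx => by
        simp only [mem_Ioo] at hx
        have h : ¬ |x.1| < 1 := by rw [not_lt, le_abs]; left; linarith [hx.1]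
        simp only [starF, if_neg h]),
      e1, e2, e3]
    ring
  have hG : ∫ x in starOmega, fderiv ℝ φ x (starG x) = 2 * A + 2 * B := by
    rw [aux_key hφ hs starG 3 1 (-1)
      (fun x hx => by
        simp only [mem_Ioo] at hx
        have h : x.1 ≤ -1 := hx.2.le
        simp only [starG, if_pos h])
      (fun x hx => by
        simp only [mem_Ioo] at hx
        have h : ¬ x.1 ≤ -1 := by linarith [hx.1]
        have h' : x.1 < 1 := hx.2
        simp only [starG, if_neg h, if_pos h'])
      (fun x hx => by
        simp only [mem_Ioo] at hx
        have h : ¬ x.1 ≤ -1 := by linarith [hx.1]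
        have h' : ¬ x.1 < 1 := by linarith [hx.1]
        simp only [starG, if_neg h, if_neg h']),
      e1, e2, e3]
    ring
  have hA0 : 0 ≤ A := setIntegral_nonneg measurableSet_Ioo (fun y _ => hpos _)
  have hB0 : 0 ≤ B := setIntegral_nonneg measurableSet_Ioo (fun y _ => hpos _)
  refine ⟨?_, abs_nonneg _⟩
  rw [hF, hG, abs_le]
  constructor <;> linarith
end
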